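/- arXiv:cs/0608011 — 2 statements merged into one kernel-verified Lean document; each statement's English description precedes it below -/
import Mathlib

section
/- Let H be a strategic game with the pure belief structure satisfying property B, and let R be any relaxation of LR̄. Then for every ordinal α, every player i, every opponent belief μ for i in R^α, and every s_i : T i: if s_i is a best response to μ in R^α, then s_i is a best response to μ in H. -/
universe u

/-- Transfinite iterations of an operator on a complete lattice:
`F^0 = ⊤`, `F^(α+1) = F (F^α)`, and `F^β = ⨅_{α<β} F^α` for limit `β`. -/
noncomputable def iterate {D : Type u} [CompleteLattice D] (F : D → D) (α : Ordinal.{0}) : D :=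
  Ordinal.limitRecOn α ⊤ (fun _ ih => F ih) (fun β _ ih => ⨅ (γ : Ordinal) (h : γ < β), ih γ h)

/-- `R` is a relaxation of `F`. -/
def Relaxation {D : Type u} [CompleteLattice D] (F R : D → D) : Prop :=
  ∀ α : Ordinal.{0},
    F (iterate R α) ≤ R (iterate R α) ∧
    (F (iterate R α) ≤ iterate R α → R (iterate R α) ≤ iterate R α) ∧
    (R (iterate R α) = iterate R α → F (iterate R α) = iterate R α)

section Games

variable {n : ℕ} {T : Fin n → Type u}

/-- `GR` operator: strategies that are a best response *in the initial game* to
some opponent belief held in `G`. -/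
def GR (p : ∀ i : Fin n, (∀ j, T j) → ℝ) (G : ∀ i, Set (T i)) : ∀ i, Set (T i) :=
  fun i => {s : T i | ∃ μ : ∀ j, T j, (∀ j, j ≠ i → μ j ∈ G j) ∧
    ∀ s' : T i, p i (Function.update μ i s') ≤ p i (Function.update μ i s)}

/-- `LR` operator: strategies that are a best response *in `G`* to
some opponent belief held in `G`. -/
def LR (p : ∀ i : Fin n, (∀ j, T j) → ℝ) (G : ∀ i, Set (T i)) : ∀ i, Set (T i) :=
  fun i => {s : T i | ∃ μ : ∀ j, T j, (∀ j, j ≠ i → μ j ∈ G j) ∧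
    ∀ s' ∈ G i, p i (Function.update μ i s') ≤ p i (Function.update μ i s)}

/-- `s'` strictly dominates `s` on the restriction `G`. -/
def Dom (p : ∀ i : Fin n, (∀ j, T j) → ℝ) (G : ∀ i, Set (T i)) (i : Fin n)
    (s' s : T i) : Prop :=
  ∀ μ : ∀ j, T j, (∀ j, j ≠ i → μ j ∈ G j) →
    p i (Function.update μ i s) < p i (Function.update μ i s')

/-- `GS` operator: strategies not strictly dominated on `G` by any strategy of the initial game. -/
def GS (p : ∀ i : Fin n, (∀ j, T j) → ℝ) (G : ∀ i, Set (T i)) : ∀ i, Set (T i) :=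
  fun i => {s : T i | ¬ ∃ s' : T i, Dom p G i s' s}

/-- `LS` operator: strategies not strictly dominated on `G` by any strategy in `G`. -/
def LS (p : ∀ i : Fin n, (∀ j, T j) → ℝ) (G : ∀ i, Set (T i)) : ∀ i, Set (T i) :=
  fun i => {s : T i | ¬ ∃ s' ∈ G i, Dom p G i s' s}

/-- Property B: to each belief in the initial game a best response (in the initial game) exists. -/
def PropB (p : ∀ i : Fin n, (∀ j, T j) → ℝ) : Prop :=
  ∀ (i : Fin n) (μ : ∀ j, T j), ∃ s : T i, ∀ s' : T i,
    p i (Function.update μ i s') ≤ p i (Function.update μ i s)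

/-- Property D(α). -/
def PropD (p : ∀ i : Fin n, (∀ j, T j) → ℝ) (α : Ordinal.{0}) : Prop :=
  ∀ R : (∀ i, Set (T i)) → (∀ i, Set (T i)), Relaxation (fun G => LS p G ⊓ G) R →
    ∀ (i : Fin n) (s : T i), (∃ s' : T i, Dom p (iterate R α) i s' s) →
      ∃ s' ∈ iterate R α i, Dom p (iterate R α) i s' s

/-- Property C(α). -/
def PropC (p : ∀ i : Fin n, (∀ j, T j) → ℝ) (α : Ordinal.{0}) : Prop :=
  ∀ R : (∀ i, Set (T i)) → (∀ i, Set (T i)), Relaxation (fun G => LS p G ⊓ G) R →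
    ∀ (i : Fin n) (s : T i), (∃ s' : T i, Dom p (iterate R α) i s' s) →
      ∃ s'' : T i, Dom p (iterate R α) i s'' s ∧ ¬ ∃ s' : T i, Dom p (iterate R α) i s' s''

end Games

set_option linter.unusedVariables false

/-! The key invariant: every best response in `H` to a belief held in `R^α` lies in `R^α`.
It holds at `⊤`, passes to infima, and survives a relaxed `LR̄`-step because such a best
response is in particular a best response in the current restriction. Given a best response
`t` in `H` (property B), a best response `s` in `R^α` then beats `t`, hence everything. -/

section Iterate

variable {D : Type u} [CompleteLattice D] (F R : D → D)

theorem iterate_zero : iterate R 0 = ⊤ := by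
  simp [iterate]

theorem iterate_succ (α : Ordinal.{0}) : iterate R (α + 1) = R (iterate R α) := by
  simp [iterate]

theorem iterate_limit {β : Ordinal.{0}} (hβ : Order.IsSuccLimit β) :
    iterate R β = ⨅ (γ : Ordinal) (_ : γ < β), iterate R γ := by
  simp only [iterate, Ordinal.limitRecOn_limit _ _ _ _ hβ]

variable {F R}

theorem Relaxation.iterate_succ_le (hR : Relaxation F R) (hF : ∀ G, F G ≤ G)
    (α : Ordinal.{0}) : iterate R (α + 1) ≤ iterate R α := by
  rw [iterate_succ]
  exact (hR α).2.1 (hF _)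

end Iterate

section BestResponse

variable {n : ℕ} {T : Fin n → Type u} (p : ∀ i : Fin n, (∀ j, T j) → ℝ)

def BestResponseClosed (G : ∀ i, Set (T i)) : Prop :=
  ∀ (i : Fin n) (μ : ∀ j, T j), (∀ j, j ≠ i → μ j ∈ G j) →
    ∀ s : T i, (∀ s' : T i, p i (Function.update μ i s') ≤ p i (Function.update μ i s)) →
      s ∈ G i

theorem bestResponseClosed_top : BestResponseClosed p ⊤ :=
  fun _ _ _ _ _ => Set.mem_univ _

variable {p}

theorem BestResponseClosed.iInf {ι : Sort*} {G : ι → ∀ i, Set (T i)}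
    (hG : ∀ k, BestResponseClosed p (G k)) : BestResponseClosed p (⨅ k, G k) := by
  intro i μ hμ s hs
  simp only [iInf_apply, Set.iInf_eq_iInter, Set.mem_iInter] at hμ ⊢
  exact fun k => hG k i μ (fun j hj => hμ j hj k) s hs

theorem BestResponseClosed.of_le {G G' : ∀ i, Set (T i)} (hG : BestResponseClosed p G)
    (hle : G' ≤ G) (hLR : LR p G ⊓ G ≤ G') : BestResponseClosed p G' := by
  intro i μ hμ s hs
  have hμG : ∀ j, j ≠ i → μ j ∈ G j := fun j hj => hle j (hμ j hj)
  exact hLR i ⟨⟨μ, hμG, fun s' _ => hs s'⟩, hG i μ hμG s hs⟩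

theorem bestResponseClosed_iterate {R : (∀ i, Set (T i)) → (∀ i, Set (T i))}
    (hR : Relaxation (fun G => LR p G ⊓ G) R) (α : Ordinal.{0}) :
    BestResponseClosed p (iterate R α) := by
  induction α using Ordinal.limitRecOn with
  | zero => rw [iterate_zero]; exact bestResponseClosed_top p
  | add_one α ih =>
    refine ih.of_le (hR.iterate_succ_le (fun _ => inf_le_right) α) ?_
    rw [iterate_succ]
    exact (hR α).1
  | limit β hβ ih =>
    rw [iterate_limit R hβ]
    exact BestResponseClosed.iInf fun γ => BestResponseClosed.iInf fun hγ => ih γ hγ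

end BestResponse

theorem stmt_8_general {n : ℕ} {T : Fin n → Type u}
    (p : ∀ i : Fin n, (∀ j, T j) → ℝ) (hB : PropB p)
    (R : (∀ i, Set (T i)) → (∀ i, Set (T i)))
    (hR : Relaxation (fun G => LR p G ⊓ G) R) :
    ∀ (α : Ordinal.{0}) (i : Fin n) (μ : ∀ j, T j),
      (∀ j, j ≠ i → μ j ∈ iterate R α j) →
      ∀ s : T i,
        (∀ s' ∈ iterate R α i, p i (Function.update μ i s') ≤ p i (Function.update μ i s)) →
        ∀ s' : T i, p i (Function.update μ i s') ≤ p i (Function.update μ i s) := by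
  intro α i μ hμ s hs s'
  obtain ⟨t, ht⟩ := hB i μ
  have htR : t ∈ iterate R α i := bestResponseClosed_iterate hR α i μ hμ t ht
  exact (ht s').trans (hs t htR)

theorem stmt_8 {n : ℕ} (hn : 2 ≤ n) {T : Fin n → Type u} [∀ i, Nonempty (T i)]
    (p : ∀ i : Fin n, (∀ j, T j) → ℝ) (hB : PropB p)
    (R : (∀ i, Set (T i)) → (∀ i, Set (T i)))
    (hR : Relaxation (fun G => LR p G ⊓ G) R) :
    ∀ (α : Ordinal.{0}) (i : Fin n) (μ : ∀ j, T j),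
      (∀ j, j ≠ i → μ j ∈ iterate R α j) →
      ∀ s : T i,
        (∀ s' ∈ iterate R α i, p i (Function.update μ i s') ≤ p i (Function.update μ i s)) →
        ∀ s' : T i, p i (Function.update μ i s') ≤ p i (Function.update μ i s) :=
  stmt_8_general p hB R hR
end

section
/- Let H be a strategic game with the pure belief structure satisfying property B. Then GR̄^α = LR̄^α for all ordinals α. -/
universe u

/-! Since `GR` is monotone, each `GR̄^α` is closed under `GR`. So Property B gives, for a belief
held in `GR̄^α`, a best response in the whole game lying in `GR̄^α`; a best response within
`GR̄^α` does at least as well, hence is a best response in the whole game. Thus `GR = LR` on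
every `GR̄^α`, and the two iterations coincide. -/

section Iterate

variable {D : Type u} [CompleteLattice D]

lemma iterate_zero_s9 (F : D → D) : iterate F 0 = ⊤ :=
  Ordinal.limitRecOn_zero _ _ _

lemma iterate_add_one (F : D → D) (α : Ordinal.{0}) : iterate F (α + 1) = F (iterate F α) :=
  Ordinal.limitRecOn_add_one _ _ _ _

lemma iterate_of_isSuccLimit (F : D → D) {β : Ordinal.{0}} (hβ : Order.IsSuccLimit β) :
    iterate F β = ⨅ (γ : Ordinal) (_ : γ < β), iterate F γ :=
  Ordinal.limitRecOn_limit _ _ _ _ hβ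

lemma iterate_congr {F F' : D → D} (h : ∀ α, F (iterate F α) = F' (iterate F α))
    (α : Ordinal.{0}) : iterate F α = iterate F' α := by
  induction α using Ordinal.limitRecOn with
  | zero => rw [iterate_zero_s9, iterate_zero_s9]
  | add_one α ih => rw [iterate_add_one, iterate_add_one, h, ih]
  | limit β hβ ih =>
    rw [iterate_of_isSuccLimit F hβ, iterate_of_isSuccLimit F' hβ]
    exact iInf_congr fun γ => iInf_congr (ih γ)

lemma Monotone.apply_iterate_inf_le {F : D → D} (hF : Monotone F) (α : Ordinal.{0}) :
    F (iterate (fun x => F x ⊓ x) α) ≤ iterate (fun x => F x ⊓ x) α := by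
  induction α using Ordinal.limitRecOn with
  | zero => rw [iterate_zero_s9]; exact le_top
  | add_one α ih =>
    rw [iterate_add_one]
    exact (hF inf_le_right).trans (le_inf le_rfl ih)
  | limit β hβ ih =>
    rw [iterate_of_isSuccLimit _ hβ]
    exact le_iInf₂ fun γ hγ => (hF (iInf₂_le γ hγ)).trans (ih γ hγ)

end Iterate

section Games

variable {n : ℕ} {T : Fin n → Type u} (p : Fin n → (∀ j, T j) → ℝ)

lemma GR_mono : Monotone (GR p) :=
  fun _ _ hGG' _ _ ⟨μ, hμ, hbr⟩ => ⟨μ, fun j hj => hGG' j (hμ j hj), hbr⟩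

lemma GR_le_LR (G : ∀ i, Set (T i)) : GR p G ≤ LR p G :=
  fun _ _ ⟨μ, hμ, hbr⟩ => ⟨μ, hμ, fun s' _ => hbr s'⟩

variable {p}

lemma LR_le_GR (hB : PropB p) {G : ∀ i, Set (T i)} (hG : GR p G ≤ G) : LR p G ≤ GR p G := by
  rintro i s ⟨μ, hμ, hbr⟩
  obtain ⟨t, ht⟩ := hB i μ
  have htG : t ∈ G i := hG i ⟨μ, hμ, ht⟩
  exact ⟨μ, hμ, fun s' => (ht s').trans (hbr t htG)⟩

lemma GR_eq_LR (hB : PropB p) {G : ∀ i, Set (T i)} (hG : GR p G ≤ G) : GR p G = LR p G :=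
  le_antisymm (GR_le_LR p G) (LR_le_GR hB hG)

end Games

set_option linter.unusedVariables false

theorem stmt_9_general {n : ℕ} {T : Fin n → Type u}
    (p : ∀ i : Fin n, (∀ j, T j) → ℝ) (hB : PropB p) :
    ∀ α : Ordinal.{0},
      iterate (fun G => GR p G ⊓ G) α = iterate (fun G => LR p G ⊓ G) α :=
  iterate_congr fun α => by
    rw [GR_eq_LR hB ((GR_mono p).apply_iterate_inf_le α)]

theorem stmt_9 {n : ℕ} (hn : 2 ≤ n) {T : Fin n → Type u} [∀ i, Nonempty (T i)]
    (p : ∀ i : Fin n, (∀ j, T j) → ℝ) (hB : PropB p) :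
    ∀ α : Ordinal.{0},
      iterate (fun G => GR p G ⊓ G) α = iterate (fun G => LR p G ⊓ G) α :=
  stmt_9_general p hB
end
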